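/- arXiv:2403.14640 — 3 statements merged into one kernel-verified Lean document; each statement's English description precedes it below -/
import Mathlib

section
/- Let A, B, C, a, b, c be elements of a field K with Aa^p + Bb^p = Cc³ and ABCabc ≠ 0. Then the j-invariant of the curve E: Y² + 3Cc·XY + C²Bb^p·Y = X³ equals 27·Cc³(9Aa^p + Bb^p)³ / (AB³(ab³)^p), and moreover setting μ = Bb^p/(Aa^p), this equals 27·(1+μ)(9+μ)³/μ³. -/
/-!
For `a₂ = a₄ = a₆ = 0` one has `c₄ = a₁(a₁³ - 24a₃)` and `Δ = a₃³(a₁³ - 27a₃)`. With `a₁ = 3Cc`,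
`a₃ = C²Bbᵖ` the relation `Aaᵖ + Bbᵖ = Cc³` turns `a₁³ - 27a₃` into `27C²·Aaᵖ` and `a₁³ - 24a₃`
into `3C²(9Aaᵖ + Bbᵖ)`, which gives the first formula; the second is the first divided through
by `(Aaᵖ)⁴`.
-/

/-- No `c ≠ 0` is needed, so this also cancels the factor `27` in characteristic `3`. -/
lemma mul_mul_div_mul_cancel_left {K : Type*} [Field K] (c x y : K) :
    c * (c * x) / (c * y) = c * x / y := by
  by_cases hc : c = 0
  · simp [hc]
  · exact mul_div_mul_left _ _ hc

namespace WeierstrassCurve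

section

variable {R : Type*} [CommRing R] (u v : R)

lemma c₄_mk_a₁_a₃ : (⟨u, 0, v, 0, 0⟩ : WeierstrassCurve R).c₄ = u * (u ^ 3 - 24 * v) := by
  simp only [c₄, b₂, b₄]
  ring

lemma Δ_mk_a₁_a₃ : (⟨u, 0, v, 0, 0⟩ : WeierstrassCurve R).Δ = v ^ 3 * (u ^ 3 - 27 * v) := by
  simp only [Δ, b₂, b₄, b₆, b₈]
  ring

end

lemma c₄_pow_three_div_Δ_mk_three_mul {K : Type*} [Field K] (w v : K) :
    (⟨3 * w, 0, v, 0, 0⟩ : WeierstrassCurve K).c₄ ^ 3 / (⟨3 * w, 0, v, 0, 0⟩ : WeierstrassCurve K).Δ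
      = 27 * (w ^ 3 * (9 * w ^ 3 - 8 * v) ^ 3) / (v ^ 3 * (w ^ 3 - v)) := by
  rw [c₄_mk_a₁_a₃, Δ_mk_a₁_a₃,
    show (3 * w * ((3 * w) ^ 3 - 24 * v)) ^ 3 = 27 * (27 * (w ^ 3 * (9 * w ^ 3 - 8 * v) ^ 3)) by ring,
    show v ^ 3 * ((3 * w) ^ 3 - 27 * v) = 27 * (v ^ 3 * (w ^ 3 - v)) by ring]
  exact mul_mul_div_mul_cancel_left _ _ _

end WeierstrassCurve

/-- the `j`-invariant (that is, `c₄³/Δ`) of the Frey curve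
`Y² + 3Cc·XY + C²Bbᵖ·Y = X³` attached to a solution of `Aaᵖ + Bbᵖ = Cc³` with
`ABCabc ≠ 0` equals `27·Cc³(9Aaᵖ + Bbᵖ)³/(AB³(ab³)ᵖ)`, and with
`μ = Bbᵖ/(Aaᵖ)` it also equals `27·(1+μ)(9+μ)³/μ³`. -/
theorem stmt3 {K : Type*} [Field K] (A B C a b c : K) (p : ℕ)
    (heq : A * a ^ p + B * b ^ p = C * c ^ 3)
    (hne : A * B * C * a * b * c ≠ 0)
    (W : WeierstrassCurve K) (hW : W = ⟨3 * C * c, 0, C ^ 2 * B * b ^ p, 0, 0⟩)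
    (μ : K) (hμ : μ = B * b ^ p / (A * a ^ p)) :
    W.c₄ ^ 3 / W.Δ
        = 27 * (C * c ^ 3 * (9 * A * a ^ p + B * b ^ p) ^ 3)
            / (A * B ^ 3 * (a * b ^ 3) ^ p) ∧
    W.c₄ ^ 3 / W.Δ = 27 * ((1 + μ) * (9 + μ) ^ 3) / μ ^ 3 := by
  have hC : C ≠ 0 := fun h => hne (by simp [h])
  have hs : A * a ^ p ≠ 0 := fun h => hne (by simp_all)
  have ht : B * b ^ p ≠ 0 := fun h => hne (by simp_all)
  have hdiff : (C * c) ^ 3 - C ^ 2 * B * b ^ p = C ^ 2 * (A * a ^ p) := by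
    linear_combination -C ^ 2 * heq
  have hsum : 9 * (C * c) ^ 3 - 8 * (C ^ 2 * B * b ^ p) = C ^ 2 * (9 * A * a ^ p + B * b ^ p) := by
    linear_combination -9 * C ^ 2 * heq
  have hj : W.c₄ ^ 3 / W.Δ
      = 27 * (C * c ^ 3 * (9 * A * a ^ p + B * b ^ p) ^ 3) / (A * a ^ p * (B * b ^ p) ^ 3) := by
    rw [hW, mul_assoc 3, WeierstrassCurve.c₄_pow_three_div_Δ_mk_three_mul, hdiff, hsum]
    field_simp
  refine ⟨?_, ?_⟩
  · rw [hj, show A * B ^ 3 * (a * b ^ 3) ^ p = A * a ^ p * (B * b ^ p) ^ 3 by ring]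
  · rw [hj, ← heq, hμ, mul_assoc 9]
    generalize A * a ^ p = s at hs ⊢
    generalize B * b ^ p = t at ht ⊢
    field_simp
end

section
/- Let K be a number field, 𝔓 a prime of K above 3, and μ ∈ K with 0 ≤ v_𝔓(μ) ≤ 6·v_𝔓(3). Define j = (μ+27)(μ+3)³/μ. Then v_𝔓(j) ≥ 0. -/
open IsDedekindDomain NumberField

open scoped Classical

/-- The normalized additive `𝔓`-adic valuation on a number field `K`
(by convention `0` at `x = 0`). -/
noncomputable def vP {K : Type*} [Field K] [NumberField K]
    (P : HeightOneSpectrum (𝓞 K)) (x : K) : ℤ :=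
  if hx : x = 0 then 0
  else -Multiplicative.toAdd (WithZero.unzero (((P.valuation K).ne_zero_iff).mpr hx))

/-!
By multiplicativity, `v(j) = v(μ + 27) + 3 v(μ + 3) - v(μ)`, and the ultrametric inequality
bounds the first two terms below by `min (v μ) (3 v 3)` and `min (v μ) (v 3)`. On each of the
ranges `v μ ≤ v 3`, `v 3 < v μ ≤ 3 v 3` and `3 v 3 < v μ ≤ 6 v 3` the resulting lower bound
`3 v μ`, `3 v 3`, resp. `6 v 3 - v μ` is nonnegative.
-/

namespace vP

variable {K : Type*} [Field K] [NumberField K] (P : HeightOneSpectrum (𝓞 K))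

theorem eq_neg_log_valuation (x : K) : vP P x = -WithZero.log (P.valuation K x) := by
  by_cases hx : x = 0
  · simp [vP, hx]
  · rw [vP, dif_neg hx]
    conv_rhs => rw [← WithZero.coe_unzero ((P.valuation K).ne_zero_iff.mpr hx)]
    rfl

@[simp]
theorem zero : vP P (0 : K) = 0 := by
  simp [vP]

theorem mul {x y : K} (hx : x ≠ 0) (hy : y ≠ 0) : vP P (x * y) = vP P x + vP P y := by
  simp only [eq_neg_log_valuation, map_mul,
    WithZero.log_mul ((P.valuation K).ne_zero_iff.mpr hx) ((P.valuation K).ne_zero_iff.mpr hy)]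
  ring

theorem div {x y : K} (hx : x ≠ 0) (hy : y ≠ 0) : vP P (x / y) = vP P x - vP P y := by
  simp only [eq_neg_log_valuation, map_div₀,
    WithZero.log_div ((P.valuation K).ne_zero_iff.mpr hx) ((P.valuation K).ne_zero_iff.mpr hy)]
  ring

theorem pow (x : K) (n : ℕ) : vP P (x ^ n) = n * vP P x := by
  simp only [eq_neg_log_valuation, map_pow, WithZero.log_pow, nsmul_eq_mul]
  ring

theorem min_le_add {x y : K} (hxy : x + y ≠ 0) : min (vP P x) (vP P y) ≤ vP P (x + y) := by
  have key {x y : K} (hxy : x + y ≠ 0) (hyx : P.valuation K y ≤ P.valuation K x) :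
      vP P x ≤ vP P (x + y) := by
    have hle : P.valuation K (x + y) ≤ P.valuation K x :=
      ((P.valuation K).map_add x y).trans (max_eq_left hyx).le
    have hxy' := (P.valuation K).ne_zero_iff.mpr hxy
    have hx : P.valuation K x ≠ 0 := ne_bot_of_le_ne_bot hxy' hle
    simpa [eq_neg_log_valuation] using (WithZero.log_le_log hxy' hx).mpr hle
  rcases le_total (P.valuation K y) (P.valuation K x) with h | h
  · exact min_le_of_left_le (key hxy h)
  · exact min_le_of_right_le (add_comm x y ▸ key (add_comm x y ▸ hxy) h)

end vP

theorem stmt4_general {K : Type*} [Field K] [NumberField K]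
    (P : HeightOneSpectrum (𝓞 K))
    (μ : K)
    (h0 : 0 ≤ vP P μ) (h6 : vP P μ ≤ 6 * vP P (3 : K))
    (j : K) (hj : j = (μ + 27) * (μ + 3) ^ 3 / μ) :
    0 ≤ vP P j := by
  rcases eq_or_ne j 0 with rfl | hj0
  · simp
  subst hj
  obtain ⟨⟨hμ27, hμ3⟩, hμ⟩ : (μ + 27 ≠ 0 ∧ μ + 3 ≠ 0) ∧ μ ≠ 0 := by simpa using hj0
  have hb : min (vP P μ) (3 * vP P (3 : K)) ≤ vP P (μ + 27) := by
    simpa [show (27 : K) = 3 ^ 3 by norm_num, vP.pow] using vP.min_le_add P hμ27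
  have hc : min (vP P μ) (vP P (3 : K)) ≤ vP P (μ + 3) := vP.min_le_add P hμ3
  rw [vP.div P (mul_ne_zero hμ27 (pow_ne_zero 3 hμ3)) hμ, vP.mul P hμ27 (pow_ne_zero 3 hμ3), vP.pow]
  push_cast
  omega

/-- if `𝔓 | 3` and `0 ≤ v_𝔓(μ) ≤ 6·v_𝔓(3)` for a nonzero `μ`, then
`j = (μ+27)(μ+3)³/μ` satisfies `v_𝔓(j) ≥ 0`. -/
theorem stmt4 {K : Type*} [Field K] [NumberField K]
    (P : HeightOneSpectrum (𝓞 K)) (h3 : (3 : 𝓞 K) ∈ P.asIdeal)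
    (μ : K) (hμ : μ ≠ 0)
    (h0 : 0 ≤ vP P μ) (h6 : vP P μ ≤ 6 * vP P (3 : K))
    (j : K) (hj : j = (μ + 27) * (μ + 3) ^ 3 / μ) :
    0 ≤ vP P j :=
  stmt4_general P μ h0 h6 j hj
end

section
/- Let A, B, C, a, b, c be elements of a field with Aa^p + Bb^p = Cc³ and ABC ≠ 0, and let E be the curve Y² + 3Cc·XY + C²Bb^p·Y = X³ with c₄ = 9C³c(9Aa^p + Bb^p) and Δ = 27AB³C⁸(ab³)^p. If 𝔮 is a prime of O_K not dividing 3ABC, (a,b,c) is primitive, and 𝔮 divides Δ, then 𝔮 divides ab, 𝔮 does not divide c, and 𝔮 does not divide c₄. -/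
open IsDedekindDomain NumberField

open scoped Classical

/-- if `𝔮 ∤ 3ABC`, `(a,b,c)` is primitive and
`𝔮 | Δ = 27AB³C⁸(ab³)ᵖ`, then `𝔮 | ab`, `𝔮 ∤ c` and
`𝔮 ∤ c₄ = 9C³c(9Aaᵖ + Bbᵖ)`. -/
theorem stmt8 {K : Type*} [Field K] [NumberField K]
    (q : HeightOneSpectrum (𝓞 K))
    (A B C a b c : 𝓞 K) (p : ℕ)
    (heq : A * a ^ p + B * b ^ p = C * c ^ 3)
    (hABC : A * B * C ≠ 0)
    (hq : (3 : 𝓞 K) * A * B * C ∉ q.asIdeal)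
    (hprim : Ideal.span ({a, b, c} : Set (𝓞 K)) = ⊤)
    (hΔ : 27 * A * B ^ 3 * C ^ 8 * (a * b ^ 3) ^ p ∈ q.asIdeal) :
    a * b ∈ q.asIdeal ∧ c ∉ q.asIdeal
      ∧ 9 * C ^ 3 * c * (9 * A * a ^ p + B * b ^ p) ∉ q.asIdeal := by
  set P := q.asIdeal with hPdef
  have hP : P.IsPrime := q.isPrime
  have h3 : (3 : 𝓞 K) ∉ P := fun h => hq (Ideal.mul_mem_right _ _
    (Ideal.mul_mem_right _ _ (Ideal.mul_mem_right _ _ h)))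
  have hA : A ∉ P := fun h => hq (Ideal.mul_mem_right _ _
    (Ideal.mul_mem_right _ _ (Ideal.mul_mem_left _ _ h)))
  have hB : B ∉ P := fun h => hq (Ideal.mul_mem_right _ _ (Ideal.mul_mem_left _ _ h))
  have hC : C ∉ P := fun h => hq (Ideal.mul_mem_left _ _ h)
  have h9 : (9 : 𝓞 K) ∉ P := fun h => by
    have h9' : (3 : 𝓞 K) * 3 ∈ P := by norm_num at h ⊢; exact h
    exact h3 ((hP.mem_or_mem h9').elim id id)
  have h27 : (27 : 𝓞 K) ∉ P := fun h => by
    have h27' : (3 : 𝓞 K) * 9 ∈ P := by norm_num at h ⊢; exact h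
    exact (hP.mem_or_mem h27').elim h3 h9
  have hlead : 27 * A * B ^ 3 * C ^ 8 ∉ P := fun h => by
    rcases hP.mem_or_mem h with h | h
    · rcases hP.mem_or_mem h with h | h
      · rcases hP.mem_or_mem h with h | h
        · exact h27 h
        · exact hA h
      · exact hB (hP.mem_of_pow_mem _ h)
    · exact hC (hP.mem_of_pow_mem _ h)
  have hpow : (a * b ^ 3) ^ p ∈ P := (hP.mem_or_mem hΔ).resolve_left hlead
  have hab3 : a * b ^ 3 ∈ P := hP.mem_of_pow_mem _ hpow
  have hp0 : p ≠ 0 := by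
    rintro rfl
    rw [pow_zero] at hpow
    exact hP.ne_top ((Ideal.eq_top_iff_one P).mpr hpow)
  have hor : a ∈ P ∨ b ∈ P := by
    rcases hP.mem_or_mem hab3 with h | h
    · exact Or.inl h
    · exact Or.inr (hP.mem_of_pow_mem _ h)
  have hab : a * b ∈ P := hor.elim (Ideal.mul_mem_right _ _) (Ideal.mul_mem_left _ _)
  -- not all of a, b, c are in P
  have hnotall : ¬ (a ∈ P ∧ b ∈ P ∧ c ∈ P) := by
    rintro ⟨ha, hb, hc⟩
    have hle : Ideal.span ({a, b, c} : Set (𝓞 K)) ≤ P := by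
      rw [Ideal.span_le]
      rintro x (rfl | rfl | rfl) <;> assumption
    rw [hprim] at hle
    exact hP.ne_top (top_le_iff.mp hle)
  have hc : c ∉ P := by
    intro hc
    have hCc : A * a ^ p + B * b ^ p ∈ P := by
      rw [heq]; exact Ideal.mul_mem_left _ _ (Ideal.pow_mem_of_mem P hc 3 (by norm_num))
    rcases hor with ha | hb
    · have h1 : A * a ^ p ∈ P :=
        Ideal.mul_mem_left _ _ (Ideal.pow_mem_of_mem P ha p (Nat.pos_of_ne_zero hp0))
      have h2 : B * b ^ p ∈ P := by
        have := P.sub_mem hCc h1; simpa using this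
      have hb : b ∈ P :=
        hP.mem_of_pow_mem _ ((hP.mem_or_mem h2).resolve_left hB)
      exact hnotall ⟨ha, hb, hc⟩
    · have h2 : B * b ^ p ∈ P :=
        Ideal.mul_mem_left _ _ (Ideal.pow_mem_of_mem P hb p (Nat.pos_of_ne_zero hp0))
      have h1 : A * a ^ p ∈ P := by
        have := P.sub_mem hCc h2; simpa using this
      have ha : a ∈ P :=
        hP.mem_of_pow_mem _ ((hP.mem_or_mem h1).resolve_left hA)
      exact hnotall ⟨ha, hb, hc⟩
  refine ⟨hab, hc, ?_⟩
  intro hc4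
  have hsum : 9 * A * a ^ p + B * b ^ p ∈ P := by
    rcases hP.mem_or_mem hc4 with h | h
    · rcases hP.mem_or_mem h with h | h
      · rcases hP.mem_or_mem h with h | h
        · exact absurd h h9
        · exact absurd (hP.mem_of_pow_mem _ h) hC
      · exact absurd h hc
    · exact h
  have hboth : a ∈ P ∧ b ∈ P := by
    rcases hor with ha | hb
    · have h1 : 9 * A * a ^ p ∈ P :=
        Ideal.mul_mem_left _ _ (Ideal.pow_mem_of_mem P ha p (Nat.pos_of_ne_zero hp0))
      have h2 : B * b ^ p ∈ P := by
        have := P.sub_mem hsum h1; simpa using this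
      exact ⟨ha, hP.mem_of_pow_mem _ ((hP.mem_or_mem h2).resolve_left hB)⟩
    · have h2 : B * b ^ p ∈ P :=
        Ideal.mul_mem_left _ _ (Ideal.pow_mem_of_mem P hb p (Nat.pos_of_ne_zero hp0))
      have h1 : 9 * A * a ^ p ∈ P := by
        have := P.sub_mem hsum h2; simpa using this
      have ha : a ∈ P := by
        rcases hP.mem_or_mem h1 with h | h
        · rcases hP.mem_or_mem h with h | h
          · exact absurd h h9
          · exact absurd h hA
        · exact hP.mem_of_pow_mem _ h
      exact ⟨ha, hb⟩
  have hcP : c ∈ P := by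
    have hCc : C * c ^ 3 ∈ P := by
      rw [← heq]
      exact P.add_mem
        (Ideal.mul_mem_left _ _ (Ideal.pow_mem_of_mem P hboth.1 p (Nat.pos_of_ne_zero hp0)))
        (Ideal.mul_mem_left _ _ (Ideal.pow_mem_of_mem P hboth.2 p (Nat.pos_of_ne_zero hp0)))
    exact hP.mem_of_pow_mem _ ((hP.mem_or_mem hCc).resolve_left hC)
  exact hc hcP
end
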